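/- Let C be a ternary self-dual code of length n and let x ∈ F_3^n be a vector such that wt(x) ≡ 0 (mod 3) and x ∉ C. Then the code N(C,x) = ⟨C ∩ ⟨x⟩^⊥, x⟩, i.e., the F_3-span of x together with the intersection of C with the dual code of the span of x, is a self-dual code of length n. -/

import Mathlib

open Matrix

/-- The field with 3 elements. -/
abbrev F3 : Type := ZMod 3

/-- The `n × n` negacirculant matrix over `F3` with first row `r`:
its `(i,j)` entry is `r ((j-i) mod n)` if `i ≤ j` and `2 * r ((j-i) mod n)` if `i > j`. -/
def negacirc {n : ℕ} (r : Fin n → F3) : Matrix (Fin n) (Fin n) F3 :=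
  fun i j => if (i : ℕ) ≤ (j : ℕ) then r (j - i) else 2 * r (j - i)

/-- A matrix is negacirculant if it is the negacirculant matrix of some first row. -/
def IsNegacirculant {n : ℕ} (M : Matrix (Fin n) (Fin n) F3) : Prop :=
  ∃ r : Fin n → F3, M = negacirc r

/-- The generator matrix `(I | M)` where `M` is the 3×3 block matrix with blocks `M i j`. -/
def genMat {n : ℕ} (M : Fin 3 → Fin 3 → Matrix (Fin n) (Fin n) F3) :
    Matrix (Fin 3 × Fin n) ((Fin 3 × Fin n) ⊕ (Fin 3 × Fin n)) F3 :=
  Matrix.fromCols 1 (fun p q => M p.1 q.1 p.2 q.2)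

/-- The ternary `[6n, 3n]` code `C(M₁₁, …, M₃₃)` generated by the rows of `(I | M)`. -/
def codeC {n : ℕ} (M : Fin 3 → Fin 3 → Matrix (Fin n) (Fin n) F3) :
    Submodule F3 (((Fin 3 × Fin n) ⊕ (Fin 3 × Fin n)) → F3) :=
  Submodule.span F3 (Set.range (genMat M))

/-- The code `C(r₁, r₂, r₃)` where `r i j` is the first row of the negacirculant block `M i j`. -/
def codeCr {n : ℕ} (r : Fin 3 → Fin 3 → Fin n → F3) :
    Submodule F3 (((Fin 3 × Fin n) ⊕ (Fin 3 × Fin n)) → F3) :=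
  codeC (fun i j => negacirc (r i j))

/-- A monomial matrix: exactly one nonzero entry in each row and in each column. -/
def IsMonomial {ι : Type*} [Fintype ι] (P : Matrix ι ι F3) : Prop :=
  (∀ i, ∃! j, P i j ≠ 0) ∧ (∀ j, ∃! i, P i j ≠ 0)

/-- Two ternary codes are equivalent if one is the image of the other under a monomial matrix. -/
def CodeEquiv {ι : Type*} [Fintype ι] (C C' : Submodule F3 (ι → F3)) : Prop :=
  ∃ P : Matrix ι ι F3, IsMonomial P ∧
    (C' : Set (ι → F3)) = (fun x => Matrix.vecMul x P) '' (C : Set (ι → F3))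

/-- The dual code of `C` (as a set): all vectors orthogonal to every codeword of `C`. -/
def dualCode {ι : Type*} [Fintype ι] (C : Submodule F3 (ι → F3)) : Set (ι → F3) :=
  {x | ∀ y ∈ C, ∑ i, x i * y i = 0}

/-- A ternary code is self-dual if it coincides with its dual code. -/
def IsSelfDual {ι : Type*} [Fintype ι] (C : Submodule F3 (ι → F3)) : Prop :=
  (C : Set (ι → F3)) = dualCode C

/-- The weight of a vector: the number of its nonzero coordinates. -/
def wt {ι : Type*} [Fintype ι] (x : ι → F3) : ℕ :=
  (Finset.univ.filter fun i => x i ≠ 0).card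

/-- `C` has minimum weight `d`: some nonzero codeword has weight `d`
and every nonzero codeword has weight at least `d`. -/
def MinWeightIs {ι : Type*} [Fintype ι] (C : Submodule F3 (ι → F3)) (d : ℕ) : Prop :=
  (∃ c ∈ C, c ≠ 0 ∧ wt c = d) ∧ ∀ c ∈ C, c ≠ 0 → d ≤ wt c

/-- `N(C, x) = ⟨C ∩ ⟨x⟩^⊥, x⟩`: the span of `x` together with `C ∩ ⟨x⟩^⊥`. -/
def NCx {ι : Type*} [Fintype ι] (C : Submodule F3 (ι → F3)) (x : ι → F3) :
    Submodule F3 (ι → F3) :=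
  Submodule.span F3 (((C : Set (ι → F3)) ∩ dualCode (Submodule.span F3 {x})) ∪ {x})


/-!
Over `F₃` the dot product `x ⬝ᵥ x` counts the nonzero coordinates of `x`, so `wt x ≡ 0 (mod 3)`
makes `x` isotropic. Hence `N(C, x)` is self-orthogonal: `C ∩ ⟨x⟩^⊥` lies in `C = C^⊥` and is
orthogonal to `x`. For the dimension, cutting `C` by the hyperplane `x^⊥` loses at most one
dimension and adjoining `x ∉ C` adds one back, so `dim N(C, x) ≥ dim C = n / 2`; a
self-orthogonal subspace of half the dimension of a nondegenerate space is its own orthogonal.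
-/
open Module LinearMap.BilinForm

namespace LinearMap.BilinForm

variable {K V : Type*} [Field K] [AddCommGroup V] [Module K V] {B : LinearMap.BilinForm K V}

theorem span_le_orthogonal_span {S : Set V} (hS : ∀ a ∈ S, ∀ b ∈ S, B a b = 0) :
    Submodule.span K S ≤ B.orthogonal (Submodule.span K S) :=
  Submodule.span_le.2 fun b hb _ ha =>
    (Submodule.span_le (p := LinearMap.ker (B.flip b)).2 fun a ha' => hS a ha' b hb) ha

variable [FiniteDimensional K V]

theorem two_mul_finrank_of_eq_orthogonal (hB : B.Nondegenerate) {W : Submodule K V}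
    (hW : W = B.orthogonal W) : 2 * finrank K W = finrank K V := by
  have := finrank_orthogonal hB W
  rw [← hW] at this
  have := W.finrank_le
  omega

theorem eq_orthogonal_of_le_of_finrank_le (hB : B.Nondegenerate) {W : Submodule K V}
    (hle : W ≤ B.orthogonal W) (hdim : finrank K V ≤ 2 * finrank K W) :
    W = B.orthogonal W :=
  Submodule.eq_of_le_of_finrank_le hle (by rw [finrank_orthogonal hB]; omega)

end LinearMap.BilinForm

theorem Submodule.finrank_le_finrank_inf_ker_add_one {K V : Type*} [Field K] [AddCommGroup V]
    [Module K V] [FiniteDimensional K V] (W : Submodule K V) (f : Module.Dual K V) :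
    finrank K W ≤ finrank K (W ⊓ LinearMap.ker f : Submodule K V) + 1 := by
  have hrange : finrank K (LinearMap.range f) ≤ 1 :=
    (Submodule.finrank_le _).trans_eq (finrank_self K)
  have := LinearMap.finrank_range_add_finrank_ker f
  have := Submodule.finrank_sup_add_finrank_inf_eq W (LinearMap.ker f)
  have := (W ⊔ LinearMap.ker f).finrank_le
  omega

namespace Matrix

variable {K ι : Type*} [Field K] [Fintype ι]

theorem dotProductBilin_nondegenerate [DecidableEq ι] :
    (dotProductBilin K K : LinearMap.BilinForm K (ι → K)).Nondegenerate := by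
  refine ⟨fun x hx => funext fun i => ?_, fun y hy => funext fun i => ?_⟩
  · simpa using hx (Pi.single i 1)
  · simpa using hy (Pi.single i 1)

end Matrix

open Matrix

section TernaryCode

abbrev dotForm (ι : Type*) [Fintype ι] : LinearMap.BilinForm F3 (ι → F3) := dotProductBilin F3 F3

variable {ι : Type*} [Fintype ι]

theorem dualCode_eq_orthogonal (C : Submodule F3 (ι → F3)) :
    dualCode C = ((dotForm ι).orthogonal C : Set (ι → F3)) := by
  ext x
  refine forall₂_congr fun y _ => ?_
  rw [dotProductBilin_apply_apply, dotProduct_comm]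
  rfl

theorem isSelfDual_iff_eq_orthogonal {C : Submodule F3 (ι → F3)} :
    IsSelfDual C ↔ C = (dotForm ι).orthogonal C := by
  rw [IsSelfDual, dualCode_eq_orthogonal, SetLike.coe_set_eq]

theorem mem_dualCode_span_singleton {x y : ι → F3} :
    y ∈ dualCode (Submodule.span F3 {x}) ↔ x ⬝ᵥ y = 0 := by
  rw [dualCode_eq_orthogonal, SetLike.mem_coe, mem_orthogonal_iff]
  constructor
  · exact fun h => h x (Submodule.mem_span_singleton_self x)
  · rintro h _ hz
    obtain ⟨c, rfl⟩ := Submodule.mem_span_singleton.1 hz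
    simp [h]

theorem NCx_eq_sup (C : Submodule F3 (ι → F3)) (x : ι → F3) :
    NCx C x = C ⊓ LinearMap.ker (dotForm ι x) ⊔ Submodule.span F3 {x} := by
  have : (C : Set (ι → F3)) ∩ dualCode (Submodule.span F3 {x}) =
      (C ⊓ LinearMap.ker (dotForm ι x) : Submodule F3 (ι → F3)) := by
    ext y
    simp [mem_dualCode_span_singleton]
  rw [NCx, Submodule.span_union, this, Submodule.span_eq]

theorem dotProduct_self_eq_wt (x : ι → F3) : x ⬝ᵥ x = wt x := by
  have hsq : ∀ a : F3, a * a = if a = 0 then 0 else 1 := by decide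
  simp only [dotProduct, hsq, Finset.sum_ite, Finset.sum_const_zero, zero_add, Finset.sum_const,
    nsmul_eq_mul, mul_one, wt]

end TernaryCode

theorem stmt5 (n : ℕ) (C : Submodule F3 (Fin n → F3)) (hC : IsSelfDual C)
    (x : Fin n → F3) (hwt : wt x % 3 = 0) (hx : x ∉ C) :
    IsSelfDual (NCx C x) := by
  rw [isSelfDual_iff_eq_orthogonal] at hC ⊢
  have hB : (dotForm (Fin n)).Nondegenerate := dotProductBilin_nondegenerate
  have hxx : x ⬝ᵥ x = 0 := by
    rw [dotProduct_self_eq_wt, ZMod.natCast_eq_zero_iff]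
    exact Nat.dvd_of_mod_eq_zero hwt
  have hCC : ∀ a ∈ C, ∀ b ∈ C, a ⬝ᵥ b = 0 := fun a ha b hb => hC.le hb a ha
  apply eq_orthogonal_of_le_of_finrank_le hB
  · refine span_le_orthogonal_span ?_
    rintro a (⟨haC, hax⟩ | rfl) b (⟨hbC, hbx⟩ | rfl)
    · exact hCC a haC b hbC
    · exact (dotProduct_comm _ _).trans (mem_dualCode_span_singleton.1 hax)
    · exact mem_dualCode_span_singleton.1 hbx
    · exact hxx
  · rw [NCx_eq_sup, Submodule.finrank_sup_span_singleton fun h => hx (Submodule.mem_inf.1 h).1,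
      ← two_mul_finrank_of_eq_orthogonal hB hC]
    have := C.finrank_le_finrank_inf_ker_add_one (dotForm _ x)
    omega
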